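/- Assume the following: for every nonempty open subset U of G = {(x, y) ∈ ℝ² : x > 1, −1 < y < 0} there exists c_U such that for every real quadratic field discriminant D > c_U there is a reduced element α of ℚ(√D) with (α, α') ∈ U. Then lim_{D→∞} H_min(D)/√D = 1/√5, where D runs through the discriminants of real quadratic fields; that is, for every ε > 0 there is a bound B such that every real quadratic field discriminant D > B satisfies 1/√5 ≤ H_min(D)/√D ≤ 1/√5 + ε. -/

import Mathlib

/-!
Lower bound: if `a α² + b α + c = 0` with `α` irrational, then `β = a α` is an algebraic integer
with `β² + b β + a c = 0`, so `b² - 4ac = disc(1, β)` is the square of a nonzero integer (an index)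
times `D`. Hence `D ≤ b² - 4ac ≤ 5 H²` with `H = max(|a|, |b|, |c|)`.

Upper bound: for `α = (b + √D) / (2a)` with `b² - 4ac = D` and conjugate `α'` one has
`(a, b, c) = √D · (1, α + α', α α') / (α - α')`, so `H / √D = max(1, |α + α'|, |α α'|) / (α - α')`.
This is a continuous function on `G` whose value at the golden pair `(φ, ψ)` is `1 / √5`;
the hypothesis, applied to the open set where it is `< 1 / √5 + ε`, produces the required `α`
(after dividing its coefficients by their gcd).
-/

open NumberField IntermediateField

/-- The region `G = {(x, y) ∈ ℝ² : x > 1, −1 < y < 0}`. -/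
def regionG : Set (ℝ × ℝ) := {p | 1 < p.1 ∧ -1 < p.2 ∧ p.2 < 0}

open Module Real

section QuadraticExtension

variable {F E : Type*} [Field F] [Field E] [Algebra F E] {α : E}

theorem adjoin_simple_eq_top_iff_of_finrank_eq_two (h : finrank F E = 2) :
    F⟮α⟯ = ⊤ ↔ α ∉ (⊥ : IntermediateField F E) := by
  have := isSimpleOrder_of_finrank_prime F E (h ▸ Nat.prime_two)
  rw [← adjoin_simple_eq_bot_iff]
  exact ⟨fun h' h'' => bot_ne_top (h'' ▸ h'), (eq_bot_or_eq_top _).resolve_left⟩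

theorem linearIndependent_one_of_notMem_bot (hα : α ∉ (⊥ : IntermediateField F E)) :
    LinearIndependent F ![1, α] := by
  rw [LinearIndependent.pair_iff' one_ne_zero]
  intro r hr
  exact hα (mem_bot.2 ⟨r, by rw [← hr, Algebra.algebraMap_eq_smul_one]⟩)

theorem exists_sq_add_mul_add_eq_zero (h : finrank F E = 2)
    (hα : α ∉ (⊥ : IntermediateField F E)) :
    ∃ p q : F, α ^ 2 + algebraMap F E p * α + algebraMap F E q = 0 := by
  have : FiniteDimensional F E := .of_finrank_pos (by omega)
  have hint : IsIntegral F α := .of_finite F α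
  have hdeg : (minpoly F α).natDegree = 2 :=
    le_antisymm (h ▸ minpoly.natDegree_le α)
      ((minpoly.two_le_natDegree_iff hint).2 (by simpa [mem_bot] using hα))
  have hlead := (minpoly.monic hint).coeff_natDegree
  have haeval := minpoly.aeval F α
  rw [hdeg] at hlead
  rw [Polynomial.aeval_eq_sum_range, hdeg] at haeval
  refine ⟨(minpoly F α).coeff 1, (minpoly F α).coeff 0, ?_⟩
  simpa [Finset.sum_range_succ, Algebra.smul_def, hlead, add_comm, add_left_comm] using haeval

theorem discr_one_pair_eq (h : finrank F E = 2) (hα : α ∉ (⊥ : IntermediateField F E)) {p q : F}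
    (hrel : α ^ 2 + algebraMap F E p * α + algebraMap F E q = 0) :
    Algebra.discr F ![1, α] = p ^ 2 - 4 * q := by
  let B := basisOfLinearIndependentOfCardEqFinrank (linearIndependent_one_of_notMem_bot hα)
    (by simp [h])
  have hB : ⇑B = ![1, α] := coe_basisOfLinearIndependentOfCardEqFinrank _ _
  have hsq : α * α = (-p) • α + (-q) • 1 := by
    rw [Algebra.smul_def, Algebra.smul_def, map_neg, map_neg, mul_one]
    linear_combination hrel
  have htr_one : Algebra.trace F E 1 = 2 := by
    simpa [h] using Algebra.trace_algebraMap (S := E) (1 : F)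
  have htr : Algebra.trace F E α = -p := by
    have e0 : α * B 0 = (0 : F) • B 0 + (1 : F) • B 1 := by simp [hB]
    have e1 : α * B 1 = (-q) • B 0 + (-p) • B 1 := by simp [hB, hsq, add_comm]
    rw [Algebra.trace_eq_matrix_trace B, Matrix.trace_fin_two, Algebra.leftMulMatrix_eq_repr_mul,
      Algebra.leftMulMatrix_eq_repr_mul, e0, e1]
    simp
  have htr_sq : Algebra.trace F E (α * α) = p ^ 2 - 2 * q := by
    rw [hsq, map_add, map_smul, map_smul, htr, htr_one, smul_eq_mul, smul_eq_mul]
    ring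
  rw [Algebra.discr_def, Matrix.det_fin_two]
  simp only [Algebra.traceMatrix_apply, Algebra.traceForm_apply, Matrix.cons_val_zero,
    Matrix.cons_val_one, Matrix.cons_val_fin_one, mul_one, one_mul, htr_one, htr, htr_sq]
  ring

end QuadraticExtension

theorem Algebra.discr_eq_det_toMatrix_sq_mul {A B ι : Type*} [CommRing A] [CommRing B]
    [Algebra A B] [Fintype ι] [DecidableEq ι] (b : Basis ι A B) (v : ι → B) :
    Algebra.discr A v = (b.toMatrix v).det ^ 2 * Algebra.discr A b := by
  conv_lhs => rw [← b.toMatrix_map_vecMul v]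
  exact Algebra.discr_of_matrix_vecMul _ _

@[simp, norm_cast]
theorem Int.cast_discrim {R : Type*} [Ring R] (a b c : ℤ) :
    ((discrim a b c : ℤ) : R) = discrim (a : R) b c := by
  simp [discrim]

theorem exists_primitive_triple (a b c : ℤ) (ha : a ≠ 0) :
    ∃ g : ℤ, 0 < g ∧ ∃ a' b' c' : ℤ, a = g * a' ∧ b = g * b' ∧ c = g * c' ∧
      Int.gcd (Int.gcd a' b') c' = 1 := by
  obtain ⟨g, hg⟩ : ∃ g, g = Int.gcd (Int.gcd a b) c := ⟨_, rfl⟩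
  have hg0 : 0 < g :=
    hg ▸ Int.gcd_pos_of_ne_zero_left _ (Int.natCast_ne_zero.2 (Int.gcd_ne_zero_left ha))
  obtain ⟨a', rfl⟩ : (g : ℤ) ∣ a := hg ▸ (Int.gcd_dvd_left _ _).trans (Int.gcd_dvd_left _ _)
  obtain ⟨b', rfl⟩ : (g : ℤ) ∣ b := hg ▸ (Int.gcd_dvd_left _ _).trans (Int.gcd_dvd_right _ _)
  obtain ⟨c', rfl⟩ : (g : ℤ) ∣ c := hg ▸ Int.gcd_dvd_right _ _
  refine ⟨g, by exact_mod_cast hg0, a', b', c', rfl, rfl, rfl, ?_⟩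
  rw [Int.gcd_mul_left, Int.natAbs_natCast, Nat.cast_mul, Int.gcd_mul_left,
    Int.natAbs_natCast] at hg
  exact (Nat.mul_eq_left hg0.ne').1 hg.symm

section CharZero

variable {K : Type*} [Field K] [CharZero K]

theorem discrim_ne_zero_of_notMem_bot {α : K} (hα : α ∉ (⊥ : IntermediateField ℚ K))
    {a b c : ℤ} (ha : a ≠ 0) (hrel : (a : K) * α ^ 2 + b * α + c = 0) : discrim a b c ≠ 0 := by
  intro h
  have hsq : discrim (a : K) b c = (2 * a * α + b) ^ 2 :=
    discrim_eq_sq_of_quadratic_eq_zero (by linear_combination hrel)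
  have h2a : (2 * a : K) ≠ 0 := by exact_mod_cast mul_ne_zero two_ne_zero ha
  have hroot : α = -b / (2 * a) := by
    rw [eq_div_iff h2a]
    have : (2 * a * α + b : K) ^ 2 = 0 := by rw [← hsq]; exact_mod_cast h
    linear_combination pow_eq_zero_iff two_ne_zero |>.1 this
  exact hα (hroot ▸ div_mem (neg_mem (intCast_mem _ b)) (mul_mem (ofNat_mem _ 2) (intCast_mem _ a)))

theorem ne_zero_of_gcd_eq_one {α : K} (hα : α ∉ (⊥ : IntermediateField ℚ K)) {a b c : ℤ}
    (hrel : (a : K) * α ^ 2 + b * α + c = 0) (hgcd : Int.gcd (Int.gcd a b) c = 1) : a ≠ 0 := by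
  rintro rfl
  obtain rfl : b = 0 := by
    by_contra hb
    refine hα (mem_bot.2 ⟨-c / b, ?_⟩)
    rw [map_div₀, map_neg, map_intCast, map_intCast, div_eq_iff (Int.cast_ne_zero.2 hb)]
    linear_combination -hrel
  obtain rfl : c = 0 := by simpa using hrel
  simp at hgcd

theorem exists_int_quadratic_relation (hK : finrank ℚ K = 2) {α : K}
    (hα : α ∉ (⊥ : IntermediateField ℚ K)) :
    ∃ a b c : ℤ, a ≠ 0 ∧ (a : K) * α ^ 2 + b * α + c = 0 := by
  obtain ⟨p, q, hrel⟩ := exists_sq_add_mul_add_eq_zero hK hα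
  refine ⟨p.den * q.den, p.num * q.den, q.num * p.den, by positivity, ?_⟩
  have hp : ((p.num : ℤ) : K) = p * p.den := by exact_mod_cast (Rat.mul_den_eq_num p).symm
  have hq : ((q.num : ℤ) : K) = q * q.den := by exact_mod_cast (Rat.mul_den_eq_num q).symm
  rw [eq_ratCast, eq_ratCast] at hrel
  push_cast
  rw [hp, hq]
  linear_combination (p.den * q.den : K) * hrel

theorem exists_root_notMem_bot {σ : K} (hσ : σ ∉ (⊥ : IntermediateField ℚ K)) {a b c : ℤ}
    (ha : a ≠ 0) (hdisc : σ ^ 2 = discrim a b c) :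
    ∃ α : K, α ∉ (⊥ : IntermediateField ℚ K) ∧ (a : K) * α ^ 2 + b * α + c = 0 := by
  have h2a : (2 * a : K) ≠ 0 := by exact_mod_cast mul_ne_zero two_ne_zero ha
  have hs : discrim (a : K) b c = σ * σ := by rw [← Int.cast_discrim, ← hdisc, sq]
  refine ⟨(-b + σ) / (2 * a), fun hα => hσ ?_, ?_⟩
  · have hσα : σ = 2 * a * ((-b + σ) / (2 * a)) + b := by field_simp; ring
    rw [hσα]
    exact add_mem (mul_mem (mul_mem (ofNat_mem _ 2) (intCast_mem _ a)) hα) (intCast_mem _ b)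
  · linear_combination (quadratic_eq_zero_iff (Int.cast_ne_zero.2 ha) hs _).2 (.inl rfl)

theorem exists_primitive_relation {α : K} {a b c : ℤ} (ha : a ≠ 0)
    (hrel : (a : K) * α ^ 2 + b * α + c = 0) :
    ∃ a' b' c' : ℤ, (a' : K) * α ^ 2 + b' * α + c' = 0 ∧ Int.gcd (Int.gcd a' b') c' = 1 ∧
      max |a'| (max |b'| |c'|) ≤ max |a| (max |b| |c|) := by
  obtain ⟨g, hg, a', b', c', rfl, rfl, rfl, hgcd⟩ := exists_primitive_triple a b c ha
  refine ⟨a', b', c', mul_left_cancel₀ (Int.cast_ne_zero.2 hg.ne' : (g : K) ≠ 0) ?_, hgcd, ?_⟩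
  · push_cast at hrel
    linear_combination hrel
  · simp only [abs_mul, abs_of_pos hg, ← mul_max_of_nonneg _ _ hg.le]
    exact le_mul_of_one_le_left (by positivity) hg

end CharZero

section NumberField

variable {K : Type*} [Field K] [NumberField K]

theorem exists_discr_eq_sq_mul_discr {ι : Type*} [Fintype ι] [DecidableEq ι]
    (hcard : Fintype.card ι = finrank ℚ K) {v : ι → K} (hv : ∀ i, IsIntegral ℤ (v i)) :
    ∃ z : ℤ, Algebra.discr ℚ v = z ^ 2 * discr K := by
  have e : Free.ChooseBasisIndex ℤ (𝓞 K) ≃ ι := Fintype.equivOfCardEq <| by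
    rw [hcard, ← RingOfIntegers.rank, finrank_eq_card_chooseBasisIndex]
  let b := (integralBasis K).reindex e
  have hint : IsIntegral ℤ (b.toMatrix v).det := IsIntegral.det fun i j => by
    obtain ⟨x, hx⟩ : ∃ x : 𝓞 K, algebraMap (𝓞 K) K x = v j := ⟨⟨v j, hv j⟩, rfl⟩
    rw [Basis.toMatrix_apply, ← hx, Basis.repr_reindex_apply, integralBasis_repr_apply]
    exact isIntegral_algebraMap
  obtain ⟨z, hz⟩ := IsIntegrallyClosed.isIntegral_iff.1 hint
  refine ⟨z, ?_⟩
  rw [Algebra.discr_eq_det_toMatrix_sq_mul b, ← hz, Basis.coe_reindex, Algebra.discr_reindex,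
    ← coe_discr, eq_intCast]

theorem exists_discrim_eq_sq_mul_discr (hK : finrank ℚ K = 2) {α : K}
    (hα : α ∉ (⊥ : IntermediateField ℚ K)) {a b c : ℤ} (ha : a ≠ 0)
    (hrel : (a : K) * α ^ 2 + b * α + c = 0) : ∃ e : ℤ, discrim a b c = e ^ 2 * discr K := by
  have haK : (a : K) ≠ 0 := Int.cast_ne_zero.2 ha
  set β := (a : K) * α
  have hβ : β ∉ (⊥ : IntermediateField ℚ K) := fun h => hα <| by
    simpa [β, haK] using div_mem h (intCast_mem _ a)
  have hrelβ : β ^ 2 + algebraMap ℚ K b * β + algebraMap ℚ K (a * c : ℤ) = 0 := by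
    rw [map_intCast, map_intCast, Int.cast_mul]
    linear_combination (a : K) * hrel
  have hint : IsIntegral ℤ β := by
    refine ⟨Polynomial.X ^ 2 + Polynomial.C b * Polynomial.X + Polynomial.C (a * c),
      by monicity!, ?_⟩
    simp only [Polynomial.eval₂_add, Polynomial.eval₂_mul, Polynomial.eval₂_X_pow,
      Polynomial.eval₂_C, Polynomial.eval₂_X]
    simpa using hrelβ
  obtain ⟨z, hz⟩ := exists_discr_eq_sq_mul_discr (v := ![1, β]) (by simp [hK])
    (Fin.forall_fin_two.2 ⟨isIntegral_one, hint⟩)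
  rw [discr_one_pair_eq hK hβ hrelβ] at hz
  exact ⟨z, by rw [discrim, mul_assoc]; exact_mod_cast hz⟩

theorem discr_le_discrim (hK : finrank ℚ K = 2) (hD : 0 < discr K) {α : K}
    (hα : α ∉ (⊥ : IntermediateField ℚ K)) {a b c : ℤ} (ha : a ≠ 0)
    (hrel : (a : K) * α ^ 2 + b * α + c = 0) : discr K ≤ discrim a b c := by
  obtain ⟨e, he⟩ := exists_discrim_eq_sq_mul_discr hK hα ha hrel
  have he0 : e ≠ 0 := by
    rintro rfl
    exact discrim_ne_zero_of_notMem_bot hα ha hrel (by simpa using he)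
  rw [he]
  exact le_mul_of_one_le_left hD.le (one_le_sq_iff_one_le_abs _ |>.2 (Int.one_le_abs he0))

theorem exists_sq_eq_discr (hK : finrank ℚ K = 2) :
    ∃ σ : K, σ ^ 2 = discr K ∧ σ ∉ (⊥ : IntermediateField ℚ K) := by
  have hbot : (⊥ : IntermediateField ℚ K) ≠ ⊤ := by
    rw [Ne, bot_eq_top_iff_finrank_eq_one, hK]
    norm_num
  obtain ⟨α, -, hα⟩ := SetLike.exists_of_lt (lt_top_iff_ne_top.2 hbot)
  obtain ⟨a, b, c, ha, hrel⟩ := exists_int_quadratic_relation hK hα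
  obtain ⟨e, he⟩ := exists_discrim_eq_sq_mul_discr hK hα ha hrel
  have he0 : (e : K) ≠ 0 := by
    intro h
    exact discrim_ne_zero_of_notMem_bot hα ha hrel (by simpa [Int.cast_eq_zero.1 h] using he)
  have hsq : discrim (a : K) b c = (2 * a * α + b) ^ 2 :=
    discrim_eq_sq_of_quadratic_eq_zero (by linear_combination hrel)
  refine ⟨(2 * a * α + b) / e, ?_, fun hσ => hα ?_⟩
  · rw [div_pow, ← hsq, ← Int.cast_discrim, he]
    push_cast
    field_simp
  · have h2a : (2 * a : K) ≠ 0 := by exact_mod_cast mul_ne_zero two_ne_zero ha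
    have hασ : α = ((2 * a * α + b) / e * e - b) / (2 * a) := by field_simp; ring
    rw [hασ]
    exact div_mem (sub_mem (mul_mem hσ (intCast_mem _ e)) (intCast_mem _ b))
      (mul_mem (ofNat_mem _ 2) (intCast_mem _ a))

theorem exists_primitive_relation_of_discrim_eq_discr (hK : finrank ℚ K = 2) {a b c : ℤ}
    (ha : a ≠ 0) (hdisc : discrim a b c = discr K) :
    ∃ (α : K) (a' b' c' : ℤ), α ∉ (⊥ : IntermediateField ℚ K) ∧
      (a' : K) * α ^ 2 + b' * α + c' = 0 ∧ Int.gcd (Int.gcd a' b') c' = 1 ∧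
      max |a'| (max |b'| |c'|) ≤ max |a| (max |b| |c|) := by
  obtain ⟨σ, hσ, hσK⟩ := exists_sq_eq_discr hK
  obtain ⟨α, hα, hrel⟩ := exists_root_notMem_bot hσK ha (hσ.trans (congrArg _ hdisc.symm))
  obtain ⟨a', b', c', hrel', hgcd, hle⟩ := exists_primitive_relation ha hrel
  exact ⟨α, a', b', c', hα, hrel', hgcd, hle⟩

end NumberField

theorem discrim_le_five_mul_sq_max {R : Type*} [CommRing R] [LinearOrder R]
    [IsStrictOrderedRing R] (a b c : R) : discrim a b c ≤ 5 * max |a| (max |b| |c|) ^ 2 := by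
  set H := max |a| (max |b| |c|)
  have ha : |a| ≤ H := le_max_left _ _
  have hb : |b| ≤ H := (le_max_left _ _).trans (le_max_right _ _)
  have hc : |c| ≤ H := (le_max_right _ _).trans (le_max_right _ _)
  have hb2 : b ^ 2 ≤ H ^ 2 := sq_le_sq' (abs_le.1 hb).1 (abs_le.1 hb).2
  have hac : -(a * c) ≤ H ^ 2 := by
    rw [sq]
    exact (neg_le_abs _).trans
      (abs_mul a c ▸ mul_le_mul ha hc (abs_nonneg _) ((abs_nonneg _).trans ha))
  rw [discrim]
  linarith

theorem inv_sqrt_five_mul_sqrt_le_max_abs {D a b c : ℤ} (h : D ≤ discrim a b c) :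
    1 / √5 * √(D : ℝ) ≤ ((max |a| (max |b| |c|) : ℤ) : ℝ) := by
  have hD : (D : ℝ) ≤ 5 * ((max |a| (max |b| |c|) : ℤ) : ℝ) ^ 2 := by
    exact_mod_cast h.trans (discrim_le_five_mul_sq_max a b c)
  have hH : (0 : ℝ) ≤ ((max |a| (max |b| |c|) : ℤ) : ℝ) := by positivity
  rw [one_div, inv_mul_le_iff₀ (by positivity), ← Real.sqrt_sq hH, ← Real.sqrt_mul (by norm_num)]
  exact Real.sqrt_le_sqrt hD

theorem isOpen_regionG : IsOpen regionG :=
  (isOpen_lt continuous_const continuous_fst).inter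
    ((isOpen_lt continuous_const continuous_snd).inter (isOpen_lt continuous_snd continuous_const))

def heightRegion (h : ℝ) : Set (ℝ × ℝ) :=
  {p | p ∈ regionG ∧ max 1 (max |p.1 + p.2| |p.1 * p.2|) < h * (p.1 - p.2)}

theorem isOpen_heightRegion (h : ℝ) : IsOpen (heightRegion h) :=
  isOpen_regionG.inter <| isOpen_lt
    (by fun_prop : Continuous fun p : ℝ × ℝ => max 1 (max |p.1 + p.2| |p.1 * p.2|)) (by fun_prop)

theorem goldenRatio_goldenConj_mem_heightRegion {ε : ℝ} (hε : 0 < ε) :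
    (goldenRatio, goldenConj) ∈ heightRegion (1 / √5 + ε) := by
  refine ⟨⟨one_lt_goldenRatio, neg_one_lt_goldenConj, goldenConj_neg⟩, ?_⟩
  dsimp only
  rw [goldenRatio_add_goldenConj, goldenRatio_mul_goldenConj, goldenRatio_sub_goldenConj]
  have : 0 < √5 := by positivity
  simp only [abs_one, abs_neg, max_self, add_mul, one_div, inv_mul_cancel₀ this.ne']
  nlinarith

theorem max_abs_lt_of_mem_heightRegion {a b c D h : ℝ} (ha : 0 < a) (hD : 0 ≤ D)
    (hdisc : discrim a b c = D)
    (hmem : ((b + √D) / (2 * a), (b - √D) / (2 * a)) ∈ heightRegion h) :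
    max |a| (max |b| |c|) < h * √D := by
  obtain ⟨-, hlt⟩ := hmem
  set x := (b + √D) / (2 * a)
  set y := (b - √D) / (2 * a)
  have hsub : a * (x - y) = √D := by simp only [x, y]; field_simp; ring
  have hadd : a * (x + y) = b := by simp only [x, y]; field_simp; ring
  have hmul : a * (x * y) = c := by
    rw [discrim] at hdisc
    simp only [x, y]
    field_simp
    linear_combination hdisc - Real.sq_sqrt hD
  calc max |a| (max |b| |c|) = a * max 1 (max |x + y| |x * y|) := by
        rw [← hadd, ← hmul, abs_mul, abs_mul, abs_of_pos ha, mul_max_of_nonneg _ _ ha.le,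
          mul_max_of_nonneg _ _ ha.le, mul_one]
    _ < a * (h * (x - y)) := mul_lt_mul_of_pos_left hlt ha
    _ = h * √D := by rw [← hsub]; ring

/-- Assume that for every nonempty open subset `U` of `G` there is `c_U`
such that for every real quadratic field discriminant `D > c_U` there is a reduced
element `α = (b + √D)/(2a)` (with `a, b, c ∈ ℤ`, `b² − 4ac = D`) of `ℚ(√D)` with
`(α, α') ∈ U`. Then `lim_{D→∞} H_min(D)/√D = 1/√5`: for every `ε > 0` there is `B` such
that every real quadratic field `K` of discriminant `D > B` satisfies: every generator
`α` of `K` has `H(α) ≥ (1/√5)·√D`, and some generator has `H(α) ≤ (1/√5 + ε)·√D`. -/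
theorem Hmin_real_quadratic_tendsto_inv_sqrt_five
    (hyp : ∀ U : Set (ℝ × ℝ), U ⊆ regionG → IsOpen U → U.Nonempty →
      ∃ cU : ℝ, ∀ (K : Type) [Field K] [NumberField K],
        Module.finrank ℚ K = 2 → 0 < NumberField.discr K →
        (NumberField.discr K : ℝ) > cU →
        ∃ a b c : ℤ, 0 < a ∧ b ^ 2 - 4 * a * c = NumberField.discr K ∧
          1 < ((b : ℝ) + Real.sqrt (NumberField.discr K : ℝ)) / (2 * a) ∧
          -1 < ((b : ℝ) - Real.sqrt (NumberField.discr K : ℝ)) / (2 * a) ∧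
          ((b : ℝ) - Real.sqrt (NumberField.discr K : ℝ)) / (2 * a) < 0 ∧
          (((b : ℝ) + Real.sqrt (NumberField.discr K : ℝ)) / (2 * a),
            ((b : ℝ) - Real.sqrt (NumberField.discr K : ℝ)) / (2 * a)) ∈ U) :
    ∀ ε : ℝ, 0 < ε → ∃ B : ℝ,
      ∀ (K : Type) [Field K] [NumberField K],
        Module.finrank ℚ K = 2 → 0 < NumberField.discr K →
        (NumberField.discr K : ℝ) > B →
        ((∀ (α : K) (a b c : ℤ), ℚ⟮α⟯ = ⊤ →
            (a : K) * α ^ 2 + (b : K) * α + (c : K) = 0 →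
            Int.gcd (Int.gcd a b) c = 1 →
            (1 / Real.sqrt 5) * Real.sqrt (NumberField.discr K : ℝ) ≤
              ((max |a| (max |b| |c|) : ℤ) : ℝ)) ∧
         (∃ (α : K) (a b c : ℤ), ℚ⟮α⟯ = ⊤ ∧
            (a : K) * α ^ 2 + (b : K) * α + (c : K) = 0 ∧
            Int.gcd (Int.gcd a b) c = 1 ∧
            ((max |a| (max |b| |c|) : ℤ) : ℝ) ≤
              (1 / Real.sqrt 5 + ε) * Real.sqrt (NumberField.discr K : ℝ))) := by
  intro ε hε
  obtain ⟨cU, hcU⟩ := hyp (heightRegion (1 / √5 + ε)) (fun _ hp => hp.1) (isOpen_heightRegion _)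
    ⟨_, goldenRatio_goldenConj_mem_heightRegion hε⟩
  refine ⟨cU, fun K _ _ hK hD hDc => ⟨fun α a b c hgen hrel hgcd => ?_, ?_⟩⟩
  · have hα := (adjoin_simple_eq_top_iff_of_finrank_eq_two hK).1 hgen
    exact inv_sqrt_five_mul_sqrt_le_max_abs
      (discr_le_discrim hK hD hα (ne_zero_of_gcd_eq_one hα hrel hgcd) hrel)
  · obtain ⟨a, b, c, ha, hdisc, -, -, -, hmem⟩ := hcU K hK hD hDc
    obtain ⟨α, a', b', c', hα, hrel, hgcd, hle⟩ :=
      exists_primitive_relation_of_discrim_eq_discr hK (b := -b) ha.ne' <| by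
        rw [← hdisc, discrim, neg_sq]
    have hbound := max_abs_lt_of_mem_heightRegion (by exact_mod_cast ha) (by exact_mod_cast hD.le)
      (by rw [← Int.cast_discrim]; exact_mod_cast hdisc) hmem
    refine ⟨α, a', b', c', (adjoin_simple_eq_top_iff_of_finrank_eq_two hK).2 hα, hrel, hgcd, ?_⟩
    rw [abs_neg] at hle
    calc ((max |a'| (max |b'| |c'|) : ℤ) : ℝ) ≤ ((max |a| (max |b| |c|) : ℤ) : ℝ) := by
          exact_mod_cast hle
      _ ≤ _ := by push_cast; exact hbound.le
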